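/- arXiv:2503.24197 — 3 statements merged into one kernel-verified Lean document; each statement's English description precedes it below -/
import Mathlib

section
/- Let d ≥ 1, let (μ_n) be a sequence of Borel probability measures on C([0,1], ℝ^d), and let μ be a Borel probability measure on C([0,1], ℝ^d). Assume: (i) for every c ∈ ℝ^d, the pushforward measures of μ_n under the continuous map f ↦ (t ↦ ⟨c, f(t)⟩) ∈ C([0,1], ℝ) converge weakly to the corresponding pushforward of μ; and (ii) for every k ≥ 1 and all times t_1, …, t_k ∈ [0,1], the pushforward measures of μ_n under the map f ↦ (f(t_1), …, f(t_k)) ∈ ℝ^{dk} converge weakly to the corresponding pushforward of μ (convergence of finite-dimensional distributions). Then μ_n converges weakly to μ on C([0,1], ℝ^d). -/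
open MeasureTheory Filter Topology BoundedContinuousFunction

/-- Borel σ-algebra on a space of continuous maps (equipped with the compact-open, i.e.
uniform-on-compacts, topology). -/
noncomputable instance continuousMapMeasurableSpace
    {X Y : Type*} [TopologicalSpace X] [TopologicalSpace Y] :
    MeasurableSpace C(X, Y) := borel _

/-- Weak convergence of a sequence of Borel measures on a topological space: integrals of
every bounded continuous real-valued function converge. -/
def WeakConv {E : Type*} [TopologicalSpace E] [MeasurableSpace E]
    (μs : ℕ → Measure E) (μ : Measure E) : Prop :=
  ∀ g : BoundedContinuousFunction E ℝ,
    Tendsto (fun n => ∫ x, g x ∂(μs n)) atTop (𝓝 (∫ x, g x ∂μ))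

/-- The continuous pairing `x ↦ ⟨c, x⟩` on `ℝ^d`, as a bundled continuous map. -/
noncomputable def pairingCM (d : ℕ) (c : Fin d → ℝ) : C(Fin d → ℝ, ℝ) :=
  ⟨fun x => ∑ i, c i * x i,
    continuous_finset_sum _ fun i _ => continuous_const.mul (continuous_apply i)⟩

/-!
The coordinate processes converge weakly on the Polish space `C([0,1], ℝ)`, so each of their
families of laws is tight; as `f ↦ (fᵢ)ᵢ` is an isometry of `C([0,1], ℝ^d)` into
`C([0,1], ℝ)^d`, the laws `μ_n` are tight as well. By Prokhorov's theorem the `μ_n` cluster, and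
every cluster point has the finite-dimensional distributions of `μ`. These determine a law on
`C([0,1], ℝ^d)`: restricting paths to a countable dense set of times is injective and continuous
on a Polish space, hence a measurable embedding into a countable product, where laws are fixed by
their finite marginals. So every cluster point is `μ`.
-/

open Set

instance continuousMapBorelSpace {X Y : Type*} [TopologicalSpace X] [TopologicalSpace Y] :
    BorelSpace C(X, Y) := ⟨rfl⟩

section WeakConv

variable {E F : Type*} [TopologicalSpace E] [MeasurableSpace E] [OpensMeasurableSpace E]

lemma weakConv_iff_tendsto {μs : ℕ → ProbabilityMeasure E} {μ : ProbabilityMeasure E} :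
    WeakConv (fun n => (μs n : Measure E)) μ ↔ Tendsto μs atTop (𝓝 μ) :=
  ProbabilityMeasure.tendsto_iff_forall_integral_tendsto.symm

lemma tendsto_map_of_weakConv_map [TopologicalSpace F] [MeasurableSpace F] [BorelSpace F]
    {μs : ℕ → ProbabilityMeasure E} {μ : ProbabilityMeasure E} {φ : E → F} (hφ : Continuous φ)
    (h : WeakConv (fun n => (μs n : Measure E).map φ) ((μ : Measure E).map φ)) :
    Tendsto (fun n => (μs n).map hφ.measurable.aemeasurable) atTop
      (𝓝 (μ.map hφ.measurable.aemeasurable)) :=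
  weakConv_iff_tendsto.1 h

end WeakConv

namespace MeasureTheory

lemma isTightMeasureSet_range_of_tendsto {E : Type*} [PseudoMetricSpace E] [CompleteSpace E]
    [SecondCountableTopology E] [MeasurableSpace E] [OpensMeasurableSpace E]
    {μs : ℕ → ProbabilityMeasure E} {μ : ProbabilityMeasure E} (h : Tendsto μs atTop (𝓝 μ)) :
    IsTightMeasureSet (range fun n => (μs n : Measure E)) := by
  have hcl : IsCompact (closure (range μs)) :=
    h.isCompact_insert_range.closure_of_subset (subset_insert _ _)
  have := isTightMeasureSet_of_isCompact_closure hcl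
  simp only [mem_range, exists_exists_eq_and] at this
  exact this

lemma isTightMeasureSet_range_of_isClosedEmbedding_pi {ι κ E : Type*} {F : κ → Type*}
    [Fintype κ] [TopologicalSpace E] [MeasurableSpace E] [OpensMeasurableSpace E]
    [∀ k, TopologicalSpace (F k)] [∀ k, MeasurableSpace (F k)] [∀ k, BorelSpace (F k)]
    {Φ : E → ∀ k, F k} (hΦ : IsClosedEmbedding Φ) {μs : ι → Measure E}
    (h : ∀ k, IsTightMeasureSet (range fun n => (μs n).map fun x => Φ x k)) :
    IsTightMeasureSet (range μs) := by
  have hΦk (k : κ) : Measurable fun x => Φ x k :=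
    ((continuous_apply k).comp hΦ.continuous).measurable
  simp only [isTightMeasureSet_iff_exists_isCompact_measure_compl_le] at h ⊢
  intro ε hε
  choose K hK hμK using fun k => h k (ε / Fintype.card κ)
    (ENNReal.div_pos hε.ne' (ENNReal.natCast_ne_top _))
  refine ⟨Φ ⁻¹' univ.pi K, hΦ.isCompact_preimage (isCompact_univ_pi hK), ?_⟩
  rintro _ ⟨n, rfl⟩
  calc μs n (Φ ⁻¹' univ.pi K)ᶜ
      ≤ μs n (⋃ k, (fun x => Φ x k) ⁻¹' (K k)ᶜ) :=
        measure_mono fun x hx => by simpa [Set.mem_pi] using hx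
    _ ≤ ∑ k, μs n ((fun x => Φ x k) ⁻¹' (K k)ᶜ) := measure_iUnion_fintype_le _ _
    _ ≤ ∑ k, (μs n).map (fun x => Φ x k) (K k)ᶜ := by
        gcongr with k
        exact Measure.le_map_apply (hΦk k).aemeasurable _
    _ ≤ ∑ _k : κ, ε / Fintype.card κ := by
        gcongr with k
        exact hμK k _ ⟨n, rfl⟩
    _ ≤ ε := by
        rw [Finset.sum_const, Finset.card_univ, nsmul_eq_mul]
        exact ENNReal.mul_div_le

end MeasureTheory

namespace MeasureTheory.ProbabilityMeasure

variable {ι E : Type*} [TopologicalSpace E] [MeasurableSpace E] {l : Filter ι}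

lemma tendsto_of_isTightMeasureSet_of_forall_mapClusterPt [T2Space E] [BorelSpace E]
    {μs : ι → ProbabilityMeasure E} {μ : ProbabilityMeasure E}
    (htight : IsTightMeasureSet (range fun n => (μs n : Measure E)))
    (h : ∀ ν, MapClusterPt ν l μs → ν = μ) : Tendsto μs l (𝓝 μ) := by
  have hcl : IsCompact (closure (range μs)) := by
    apply isCompact_closure_of_isTightMeasureSet
    simp only [mem_range, exists_exists_eq_and]
    exact htight
  exact hcl.tendsto_nhds_of_unique_mapClusterPt
    (Eventually.of_forall fun n => subset_closure (mem_range_self n)) fun ν _ => h ν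

lemma map_eq_of_mapClusterPt [OpensMeasurableSpace E] {F : Type*} [TopologicalSpace F]
    [MeasurableSpace F] [BorelSpace F] [HasOuterApproxClosed F]
    {μs : ι → ProbabilityMeasure E} {ν : ProbabilityMeasure E} (hν : MapClusterPt ν l μs)
    {φ : E → F} (hφ : Continuous φ) {ρ : ProbabilityMeasure F}
    (h : Tendsto (fun n => (μs n).map hφ.measurable.aemeasurable) l (𝓝 ρ)) :
    ν.map hφ.measurable.aemeasurable = ρ :=
  eq_of_nhds_neBot <| ClusterPt.mono (hν.continuousAt_comp (continuous_map hφ).continuousAt) h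

end MeasureTheory.ProbabilityMeasure

namespace ContinuousMap

variable {X : Type*} [TopologicalSpace X]

lemma isometry_eval_comp {κ : Type*} {Y : κ → Type*} [CompactSpace X] [Fintype κ]
    [∀ k, PseudoMetricSpace (Y k)] :
    Isometry fun (f : C(X, ∀ k, Y k)) k => (eval k).comp f := by
  refine Isometry.of_dist_eq fun f g => le_antisymm ?_ ?_
  · refine (dist_pi_le_iff dist_nonneg).2 fun k => (dist_le dist_nonneg).2 fun x => ?_
    exact (dist_le_pi_dist (f x) (g x) k).trans (dist_apply_le_dist x)
  · refine (dist_le dist_nonneg).2 fun x => (dist_pi_le_iff dist_nonneg).2 fun k => ?_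
    exact (dist_apply_le_dist (f := (eval k).comp f) (g := (eval k).comp g) x).trans
      (dist_le_pi_dist (fun k => (eval k).comp f) (fun k => (eval k).comp g) k)

variable {Y : Type*} [TopologicalSpace Y] [T2Space Y] [MeasurableSpace Y] [BorelSpace Y]
  [SecondCountableTopology Y] [PolishSpace C(X, Y)]

lemma measurableEmbedding_restrict_of_dense {s : Set X} [Countable s] (hs : Dense s) :
    MeasurableEmbedding fun (f : C(X, Y)) (x : s) => f x :=
  (continuous_pi fun (x : s) => continuous_eval_const (x : X)).measurableEmbedding
    fun f g (hfg : (fun x : s => f x) = fun x : s => g x) => coe_injective <|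
      Continuous.ext_on hs f.continuous g.continuous fun x hx => congrFun hfg ⟨x, hx⟩

theorem measure_ext_of_forall_map_eval_eq [TopologicalSpace.SeparableSpace X]
    {μ ν : Measure C(X, Y)} [IsFiniteMeasure μ]
    (h : ∀ (k : ℕ) (t : Fin k → X), μ.map (fun f i => f (t i)) = ν.map (fun f i => f (t i))) :
    μ = ν := by
  obtain ⟨s, hs_count, hs_dense⟩ := TopologicalSpace.exists_countable_dense X
  have : Countable s := hs_count.to_subtype
  let R : C(X, Y) → (s → Y) := fun f x => f x
  have hR : MeasurableEmbedding R := measurableEmbedding_restrict_of_dense hs_dense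
  have hmarginal (J : Finset s) : (μ.map R).map J.restrict = (ν.map R).map J.restrict := by
    let t : Fin J.card → X := fun i => J.equivFin.symm i
    let e : (Fin J.card → Y) → (J → Y) := fun v j => v (J.equivFin j)
    have he : Measurable e := measurable_pi_lambda _ fun j => measurable_pi_apply _
    have ht : Measurable fun (f : C(X, Y)) i => f (t i) :=
      (continuous_pi fun i => continuous_eval_const (t i)).measurable
    have hRt : J.restrict ∘ R = e ∘ fun f i => f (t i) := by
      ext f j
      simp [R, e, t]
    rw [Measure.map_map J.measurable_restrict hR.measurable,
      Measure.map_map J.measurable_restrict hR.measurable, hRt,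
      ← Measure.map_map he ht, ← Measure.map_map he ht, h]
  have hRμν : μ.map R = ν.map R :=
    IsProjectiveLimit.unique (P := fun J => (μ.map R).map J.restrict)
      (fun J => rfl) (fun J => (hmarginal J).symm)
  rw [← hR.comap_map μ, ← hR.comap_map ν, hRμν]

end ContinuousMap

lemma pairingCM_single {d : ℕ} (i : Fin d) :
    pairingCM d (Pi.single i 1) = ContinuousMap.eval i := by
  ext x
  simp [pairingCM, Pi.single_apply]

theorem cramer_wold_for_processes_general
    (d : ℕ)
    (μs : ℕ → Measure C(Set.Icc (0:ℝ) 1, Fin d → ℝ))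
    (μ : Measure C(Set.Icc (0:ℝ) 1, Fin d → ℝ))
    (hμs : ∀ n, IsProbabilityMeasure (μs n)) (hμ : IsProbabilityMeasure μ)
    (hproj : ∀ c : Fin d → ℝ,
      WeakConv
        (fun n => (μs n).map (fun f => (pairingCM d c).comp f))
        (μ.map (fun f => (pairingCM d c).comp f)))
    (hfdd : ∀ (k : ℕ) (t : Fin k → Set.Icc (0:ℝ) 1),
      WeakConv
        (fun n => (μs n).map (fun f => fun i => f (t i)))
        (μ.map (fun f => fun i => f (t i)))) :
    WeakConv μs μ := by
  let P : ℕ → ProbabilityMeasure C(Set.Icc (0:ℝ) 1, Fin d → ℝ) := fun n => ⟨μs n, hμs n⟩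
  let Q : ProbabilityMeasure C(Set.Icc (0:ℝ) 1, Fin d → ℝ) := ⟨μ, hμ⟩
  refine (weakConv_iff_tendsto (μs := P) (μ := Q)).2 <|
    ProbabilityMeasure.tendsto_of_isTightMeasureSet_of_forall_mapClusterPt ?tight
      fun ν hν => ?limit
  case tight =>
    refine isTightMeasureSet_range_of_isClosedEmbedding_pi
      (ContinuousMap.isometry_eval_comp (X := Set.Icc (0:ℝ) 1)
        (Y := fun _ : Fin d => ℝ)).isClosedEmbedding fun i => ?_
    have hcoord : Continuous fun f : C(Set.Icc (0:ℝ) 1, Fin d → ℝ) =>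
        (pairingCM d (Pi.single i 1)).comp f :=
      ContinuousMap.continuous_postcomp _
    simpa [pairingCM_single] using isTightMeasureSet_range_of_tendsto
      (tendsto_map_of_weakConv_map (μs := P) (μ := Q) hcoord (hproj (Pi.single i 1)))
  case limit =>
    refine ProbabilityMeasure.toMeasure_injective <|
      ContinuousMap.measure_ext_of_forall_map_eval_eq fun k t => ?_
    have hfdd_cont : Continuous fun (f : C(Set.Icc (0:ℝ) 1, Fin d → ℝ)) i => f (t i) :=
      continuous_pi fun i => continuous_eval_const (t i)
    exact congrArg ProbabilityMeasure.toMeasure <| ProbabilityMeasure.map_eq_of_mapClusterPt hν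
      hfdd_cont (tendsto_map_of_weakConv_map (μs := P) (μ := Q) hfdd_cont (hfdd k t))

/-- **Cramér–Wold device for stochastic processes (continuous-path, uniform topology form).**
Let `μ_n, μ` be Borel probability measures on `C([0,1], ℝ^d)`.  If (i) for every `c ∈ ℝ^d`
the pushforwards under `f ↦ (t ↦ ⟨c, f(t)⟩)` converge weakly on `C([0,1], ℝ)`, and (ii) all
finite-dimensional distributions converge weakly, then `μ_n` converges weakly to `μ`. -/
theorem cramer_wold_for_processes
    (d : ℕ) (hd : 1 ≤ d)
    (μs : ℕ → Measure C(Set.Icc (0:ℝ) 1, Fin d → ℝ))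
    (μ : Measure C(Set.Icc (0:ℝ) 1, Fin d → ℝ))
    (hμs : ∀ n, IsProbabilityMeasure (μs n)) (hμ : IsProbabilityMeasure μ)
    (hproj : ∀ c : Fin d → ℝ,
      WeakConv
        (fun n => (μs n).map (fun f => (pairingCM d c).comp f))
        (μ.map (fun f => (pairingCM d c).comp f)))
    (hfdd : ∀ (k : ℕ) (t : Fin k → Set.Icc (0:ℝ) 1),
      WeakConv
        (fun n => (μs n).map (fun f => fun i => f (t i)))
        (μ.map (fun f => fun i => f (t i)))) :
    WeakConv μs μ :=
  cramer_wold_for_processes_general d μs μ hμs hμ hproj hfdd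
end

section
/- Let τ ∈ (0,1). For all bounded Borel-measurable functions f, g : [0,1] → ℝ one has sup_{u ∈ [0,τ]} | (𝒯f)(u) − (𝒯g)(u) | ≤ (1 + 2 log(1/(1−τ))) · sup_{v ∈ [0,1]} | f(v) − g(v) |, where (𝒯f)(u) := f(u) − ∫₀ᵘ (f(1) − f(v))/(1 − v) dv. In particular, the innovation martingale transform, restricted to the interval [0, τ], is Lipschitz continuous with respect to the supremum norm. -/
/-!
By linearity `𝒯f - 𝒯g = 𝒯(f - g)`. If `|h| ≤ S` on `[0,1]`, the integrand of `𝒯h` is at most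
`2S / (1 - v)` in absolute value, whose integral over `[0, u]` is `2S log (1 / (1 - u))`;
together with `|h u| ≤ S` this bounds `|𝒯h u|`, and the bound increases with `u ≤ τ`.
-/

open MeasureTheory intervalIntegral Set

/-- The innovation martingale transform `(𝒯f)(u) := f(u) − ∫₀ᵘ (f(1) − f(v))/(1 − v) dv`. -/
noncomputable def innovationTransform (f : ℝ → ℝ) (u : ℝ) : ℝ :=
  f u - ∫ v in (0:ℝ)..u, (f 1 - f v) / (1 - v)

lemma intervalIntegrable_one_div_one_sub {u : ℝ} (hu : u < 1) :
    IntervalIntegrable (fun v => 1 / (1 - v)) volume 0 u := by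
  refine intervalIntegrable_one_div (fun v hv => ?_) (by fun_prop)
  have hv1 : v < 1 := by rcases mem_uIcc.mp hv with h | h <;> linarith [h.1, h.2]
  exact (sub_pos.mpr hv1).ne'

lemma integral_one_div_one_sub {u : ℝ} (hu : u < 1) :
    ∫ v in (0:ℝ)..u, 1 / (1 - v) = Real.log (1 / (1 - u)) := by
  rw [integral_comp_sub_left (fun x => 1 / x), sub_zero,
    integral_one_div_of_pos (by linarith) one_pos]

noncomputable def innovationKernel (h : ℝ → ℝ) (v : ℝ) : ℝ := (h 1 - h v) / (1 - v)

lemma innovationTransform_eq (h : ℝ → ℝ) (u : ℝ) :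
    innovationTransform h u = h u - ∫ v in (0:ℝ)..u, innovationKernel h v := rfl

lemma innovationTransform_sub {f g : ℝ → ℝ} {u : ℝ}
    (hf : IntervalIntegrable (innovationKernel f) volume 0 u)
    (hg : IntervalIntegrable (innovationKernel g) volume 0 u) :
    innovationTransform (f - g) u = innovationTransform f u - innovationTransform g u := by
  have hkernel :
      innovationKernel (f - g) = fun v => innovationKernel f v - innovationKernel g v := by
    ext v
    simp only [innovationKernel, Pi.sub_apply]
    ring
  simp only [innovationTransform_eq, hkernel, Pi.sub_apply, integral_sub hf hg]
  ring

section Bounded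

variable {h : ℝ → ℝ} {S : ℝ} (hS : ∀ v ∈ Icc (0:ℝ) 1, |h v| ≤ S)
include hS

lemma norm_innovationKernel_le {v : ℝ} (hv : v ∈ Ico (0:ℝ) 1) :
    ‖innovationKernel h v‖ ≤ 2 * S * (1 / (1 - v)) := by
  have hv1 : 0 < 1 - v := sub_pos.mpr hv.2
  have hnum : |h 1 - h v| ≤ 2 * S := by
    have := abs_sub (h 1) (h v)
    linarith [hS 1 (right_mem_Icc.mpr zero_le_one), hS v (Ico_subset_Icc_self hv)]
  rw [innovationKernel, Real.norm_eq_abs, abs_div, abs_of_pos hv1, mul_one_div]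
  exact div_le_div_of_nonneg_right hnum hv1.le

lemma intervalIntegrable_innovationKernel (hm : Measurable h) {u : ℝ} (hu0 : 0 ≤ u)
    (hu1 : u < 1) : IntervalIntegrable (innovationKernel h) volume 0 u := by
  refine ((intervalIntegrable_one_div_one_sub hu1).const_mul (2 * S)).mono_fun' ?_ ?_
  · exact ((measurable_const.sub hm).div (measurable_const.sub measurable_id)).aestronglyMeasurable
  · rw [uIoc_of_le hu0]
    filter_upwards [ae_restrict_mem measurableSet_Ioc] with v hv
    exact norm_innovationKernel_le hS ⟨hv.1.le, hv.2.trans_lt hu1⟩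

lemma abs_innovationTransform_le {u : ℝ} (hu0 : 0 ≤ u) (hu1 : u < 1) :
    |innovationTransform h u| ≤ (1 + 2 * Real.log (1 / (1 - u))) * S := by
  have hintegral : ‖∫ v in (0:ℝ)..u, innovationKernel h v‖ ≤ 2 * S * Real.log (1 / (1 - u)) :=
    calc ‖∫ v in (0:ℝ)..u, innovationKernel h v‖
        ≤ ∫ v in (0:ℝ)..u, 2 * S * (1 / (1 - v)) :=
          norm_integral_le_of_norm_le hu0 (ae_of_all _ fun v hv =>
              norm_innovationKernel_le hS ⟨hv.1.le, hv.2.trans_lt hu1⟩)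
            ((intervalIntegrable_one_div_one_sub hu1).const_mul _)
      _ = 2 * S * Real.log (1 / (1 - u)) := by
          rw [intervalIntegral.integral_const_mul, integral_one_div_one_sub hu1]
  calc |innovationTransform h u|
      ≤ |h u| + ‖∫ v in (0:ℝ)..u, innovationKernel h v‖ := abs_sub _ _
    _ ≤ S + 2 * S * Real.log (1 / (1 - u)) := add_le_add (hS u ⟨hu0, hu1.le⟩) hintegral
    _ = (1 + 2 * Real.log (1 / (1 - u))) * S := by ring

end Bounded

/-- **Lipschitz continuity of the innovation martingale transform on `[0,τ]`.**
Let `τ ∈ (0,1)`.  For all bounded Borel-measurable `f, g : [0,1] → ℝ`,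
`sup_{u ∈ [0,τ]} |(𝒯f)(u) − (𝒯g)(u)| ≤ (1 + 2 log(1/(1−τ))) · sup_{v ∈ [0,1]} |f(v) − g(v)|`. -/
theorem innovationTransform_lipschitz
    (τ : ℝ) (hτ : τ ∈ Set.Ioo (0:ℝ) 1)
    (f g : ℝ → ℝ) (hf : Measurable f) (hg : Measurable g)
    (Mf : ℝ) (hMf : ∀ v ∈ Set.Icc (0:ℝ) 1, |f v| ≤ Mf)
    (Mg : ℝ) (hMg : ∀ v ∈ Set.Icc (0:ℝ) 1, |g v| ≤ Mg) :
    ∀ u ∈ Set.Icc (0:ℝ) τ,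
      |innovationTransform f u - innovationTransform g u| ≤
        (1 + 2 * Real.log (1 / (1 - τ))) *
          sSup ((fun v => |f v - g v|) '' Set.Icc (0:ℝ) 1) := by
  rintro u ⟨hu0, huτ⟩
  have hu1 : u < 1 := huτ.trans_lt hτ.2
  set S := sSup ((fun v => |f v - g v|) '' Set.Icc (0:ℝ) 1)
  have hbdd : BddAbove ((fun v => |f v - g v|) '' Set.Icc (0:ℝ) 1) :=
    ⟨Mf + Mg, forall_mem_image.mpr fun v hv =>
      (abs_sub _ _).trans (add_le_add (hMf v hv) (hMg v hv))⟩
  have hS : ∀ v ∈ Icc (0:ℝ) 1, |(f - g) v| ≤ S := fun v hv => le_csSup hbdd ⟨v, hv, rfl⟩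
  have hS0 : 0 ≤ S := (abs_nonneg _).trans (hS 0 (left_mem_Icc.mpr zero_le_one))
  rw [← innovationTransform_sub (intervalIntegrable_innovationKernel hMf hf hu0 hu1)
    (intervalIntegrable_innovationKernel hMg hg hu0 hu1)]
  calc |innovationTransform (f - g) u|
      ≤ (1 + 2 * Real.log (1 / (1 - u))) * S := abs_innovationTransform_le hS hu0 hu1
    _ ≤ (1 + 2 * Real.log (1 / (1 - τ))) * S := by
        gcongr
        linarith [hτ.2]
end

section
/- For all real numbers s, t with 0 ≤ s ≤ t < 1, the following identity holds: s − ∫₀ᵗ (s − min(s, v))/(1 − v) dv − ∫₀ˢ (t − min(u, t))/(1 − u) du + ∫₀ˢ ( ∫₀ᵗ (1 − max(u, v))/((1 − u)(1 − v)) dv ) du = s. -/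
/-!
Splitting at the kink of `max`, the inner integral `∫₀ᵗ (1 - max u v) / ((1 - u)(1 - v)) dv` equals
`∫₀ᵘ dv / (1 - v) + (t - u) / (1 - u)`. The second summand integrates over `[0, s]` to the third
term of the identity, and by Cauchy's formula for repeated integration the first one integrates to
`∫₀ˢ (s - v) / (1 - v) dv`, which is the second term. So the double integral cancels the two single
integrals, and no antiderivative involving a logarithm is ever needed.
-/

open intervalIntegral Set MeasureTheory

theorem integral_integral_eq_integral_sub_mul {f : ℝ → ℝ} {a b : ℝ}
    (hf : ContinuousOn f (uIcc a b)) :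
    ∫ x in a..b, ∫ y in a..x, f y = ∫ y in a..b, (b - y) * f y := by
  have hprim : ∀ x ∈ Ioo (min a b) (max a b),
      HasDerivAt (fun x => ∫ y in a..x, f y) (f x) x := by
    intro x hx
    exact integral_hasDerivAt_right
      (hf.mono (uIcc_subset_uIcc_left (Ioo_subset_Icc_self hx))).intervalIntegrable
      ((hf.mono Ioo_subset_Icc_self).stronglyMeasurableAtFilter isOpen_Ioo x hx)
      (hf.continuousAt (Icc_mem_nhds hx.1 hx.2))
  have hparts := integral_mul_deriv_eq_deriv_mul_of_hasDerivAt
    (continuousOn_primitive_interval hf.integrableOn_uIcc)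
    (by fun_prop : ContinuousOn (fun x => x - b) _)
    hprim (fun x _ => (hasDerivAt_id x).sub_const b) hf.intervalIntegrable intervalIntegrable_const
  simp only [mul_one, sub_self, mul_zero, integral_same, zero_mul, zero_sub] at hparts
  rw [hparts, ← intervalIntegral.integral_neg]
  congr 1 with y
  ring

theorem integral_eq_add_of_eqOn_Icc {f g h : ℝ → ℝ} {a b c : ℝ} (hab : a ≤ b) (hbc : b ≤ c)
    (hf : IntervalIntegrable f volume a c) (hg : EqOn f g (Icc a b)) (hh : EqOn f h (Icc b c)) :
    ∫ x in a..c, f x = (∫ x in a..b, g x) + ∫ x in b..c, h x := by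
  have hb : b ∈ uIcc a c := mem_uIcc_of_le hab hbc
  rw [← integral_add_adjacent_intervals (hf.mono_set (uIcc_subset_uIcc_left hb))
    (hf.mono_set (uIcc_subset_uIcc_right hb))]
  congr 1
  · exact integral_congr (uIcc_of_le hab ▸ hg)
  · exact integral_congr (uIcc_of_le hbc ▸ hh)

lemma one_sub_ne_zero_of_mem_uIcc {a b v : ℝ} (hv : v ∈ uIcc a b) (ha : a < 1) (hb : b < 1) :
    1 - v ≠ 0 :=
  sub_ne_zero.2 (hv.2.trans_lt (max_lt ha hb)).ne'

section

variable {s t u : ℝ}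

lemma integral_sub_min_div_one_sub (hs : 0 ≤ s) (hst : s ≤ t) (ht : t < 1) :
    ∫ v in (0:ℝ)..t, (s - min s v) / (1 - v) = ∫ v in (0:ℝ)..s, (s - v) * (1 - v)⁻¹ := by
  have hint : IntervalIntegrable (fun v => (s - min s v) / (1 - v)) volume 0 t := by
    refine ContinuousOn.intervalIntegrable (ContinuousOn.div (by fun_prop) (by fun_prop) ?_)
    intro v hv
    exact one_sub_ne_zero_of_mem_uIcc hv (by linarith) ht
  rw [integral_eq_add_of_eqOn_Icc hs hst hint (g := fun v => (s - v) * (1 - v)⁻¹)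
    (h := fun _ => 0)]
  · simp
  · intro v hv
    simp [min_eq_right hv.2, div_eq_mul_inv]
  · intro v hv
    simp [min_eq_left hv.1]

lemma integral_one_sub_max_div (hu : 0 ≤ u) (hut : u ≤ t) (ht : t < 1) :
    ∫ v in (0:ℝ)..t, (1 - max u v) / ((1 - u) * (1 - v))
      = (∫ v in (0:ℝ)..u, (1 - v)⁻¹) + (t - u) / (1 - u) := by
  have hu1 : 1 - u ≠ 0 := sub_ne_zero.2 (by linarith)
  have hint : IntervalIntegrable (fun v => (1 - max u v) / ((1 - u) * (1 - v))) volume 0 t := by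
    refine ContinuousOn.intervalIntegrable (ContinuousOn.div (by fun_prop) (by fun_prop) ?_)
    intro v hv
    exact mul_ne_zero hu1 (one_sub_ne_zero_of_mem_uIcc hv (by linarith) ht)
  rw [integral_eq_add_of_eqOn_Icc hu hut hint (g := fun v => (1 - v)⁻¹)
    (h := fun _ => (1 - u)⁻¹)]
  · simp [div_eq_mul_inv]
  · intro v hv
    simp only [max_eq_left hv.2]
    field_simp
  · intro v hv
    have hv1 : 1 - v ≠ 0 := sub_ne_zero.2 (by linarith [hv.2])
    simp only [max_eq_right hv.1]
    field_simp

end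

/-- **Covariance identity for the innovation martingale transform.**
For all real numbers `0 ≤ s ≤ t < 1`,
`s − ∫₀ᵗ (s − min(s,v))/(1−v) dv − ∫₀ˢ (t − min(u,t))/(1−u) du
  + ∫₀ˢ ∫₀ᵗ (1 − max(u,v))/((1−u)(1−v)) dv du = s`. -/
theorem innovation_transform_covariance_identity
    (s t : ℝ) (hs : 0 ≤ s) (hst : s ≤ t) (ht : t < 1) :
    s - (∫ v in (0:ℝ)..t, (s - min s v) / (1 - v))
      - (∫ u in (0:ℝ)..s, (t - min u t) / (1 - u))
      + (∫ u in (0:ℝ)..s, ∫ v in (0:ℝ)..t,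
          (1 - max u v) / ((1 - u) * (1 - v))) = s := by
  have hs1 : s < 1 := hst.trans_lt ht
  have hcont : ContinuousOn (fun v : ℝ => (1 - v)⁻¹) (uIcc 0 s) :=
    ContinuousOn.inv₀ (by fun_prop)
      fun v hv => one_sub_ne_zero_of_mem_uIcc hv zero_lt_one hs1
  have hmin : ∫ u in (0:ℝ)..s, (t - min u t) / (1 - u) = ∫ u in (0:ℝ)..s, (t - u) / (1 - u) :=
    integral_congr fun u hu => by
      simp only [min_eq_left ((uIcc_of_le hs ▸ hu).2.trans hst)]
  have hdouble : ∫ u in (0:ℝ)..s, ∫ v in (0:ℝ)..t, (1 - max u v) / ((1 - u) * (1 - v))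
      = (∫ u in (0:ℝ)..s, ∫ v in (0:ℝ)..u, (1 - v)⁻¹)
        + ∫ u in (0:ℝ)..s, (t - u) / (1 - u) := by
    rw [← intervalIntegral.integral_add]
    · refine integral_congr fun u hu => ?_
      rw [uIcc_of_le hs] at hu
      exact integral_one_sub_max_div hu.1 (hu.2.trans hst) ht
    · exact (continuousOn_primitive_interval hcont.integrableOn_uIcc).intervalIntegrable
    · exact (ContinuousOn.div (by fun_prop) (by fun_prop)
        fun u hu => one_sub_ne_zero_of_mem_uIcc hu zero_lt_one hs1).intervalIntegrable
  rw [integral_sub_min_div_one_sub hs hst ht, hmin, hdouble,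
    integral_integral_eq_integral_sub_mul hcont]
  ring
end
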